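/- arXiv:0812.4199 — 2 statements merged into one kernel-verified Lean document; each statement's English description precedes it below -/
import Mathlib

section
/- With payment dates T_a < T_{a+1} < ... < T_b and α_i = T_i − T_{i−1}, for a C¹ function S on [T_a, T_b] and D(T_a,u) = exp(−∫_{T_a}^u r_s ds), the identity ∫_{T_a}^{T_b} D(T_a,u)(u − T_{β(u)−1})S'(u) du = Σ_{i=a+1}^{b} α_i D(T_a,T_i)S(T_i) − ∫_{T_a}^{T_b} D(T_a,u)S(u) du + ∫_{T_a}^{T_b} S(u)(u − T_{β(u)−1})r_u D(T_a,u) du holds, where T_{β(u)−1} = T_i for u ∈ (T_i, T_{i+1}]. -/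
/-!
On each accrual period `(T i, T (i+1)]` the factor `g u` equals `u - T i`, so all three integrals
split into period integrals. On a period, integrate `D(u)(u - T i) · S'(u)` by parts: the boundary
term at `T i` vanishes, the one at `T (i+1)` is `α_{i+1} D(T (i+1)) S(T (i+1))`, and since
`D' = -r D` the derivative of `D(u)(u - T i)` is `D(u) - r(u) D(u)(u - T i)`.
-/

open Real intervalIntegral MeasureTheory Set

lemma hasDerivAt_exp_neg_integral {r : ℝ → ℝ} (hr : Continuous r) (c u : ℝ) :
    HasDerivAt (fun x ↦ exp (-∫ s in c..x, r s)) (-(r u * exp (-∫ s in c..u, r s))) u := by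
  rw [show -(r u * exp (-∫ s in c..u, r s)) = exp (-∫ s in c..u, r s) * -r u by ring]
  exact (hr.integral_hasStrictDerivAt c u).hasDerivAt.neg.exp

lemma integral_mul_sub_left_mul_deriv {r D S S' : ℝ → ℝ} (hr : Continuous r)
    (hD : ∀ u, HasDerivAt D (-(r u * D u)) u) (hS : ∀ u, HasDerivAt S (S' u) u)
    (hS' : Continuous S') (c d : ℝ) :
    (∫ u in c..d, D u * (u - c) * S' u)
      = (d - c) * D d * S d - (∫ u in c..d, D u * S u)
        + ∫ u in c..d, S u * (u - c) * r u * D u := by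
  have hDc : Continuous D := continuous_iff_continuousAt.2 fun u ↦ (hD u).continuousAt
  have hSc : Continuous S := continuous_iff_continuousAt.2 fun u ↦ (hS u).continuousAt
  have hweight : ∀ u, HasDerivAt (fun x ↦ D x * (x - c)) (D u - r u * D u * (u - c)) u := by
    intro u
    refine ((hD u).mul ((hasDerivAt_id' u).sub_const c)).congr_deriv ?_
    ring
  have hparts := intervalIntegral.integral_mul_deriv_eq_deriv_mul (fun u _ ↦ hweight u)
    (fun u _ ↦ hS u)
    ((by fun_prop : Continuous fun u ↦ D u - r u * D u * (u - c)).intervalIntegrable c d)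
    (hS'.intervalIntegrable c d)
  have hsplit : (∫ u in c..d, (D u - r u * D u * (u - c)) * S u)
      = (∫ u in c..d, D u * S u) - ∫ u in c..d, S u * (u - c) * r u * D u := by
    rw [← intervalIntegral.integral_sub
      ((by fun_prop : Continuous fun u ↦ D u * S u).intervalIntegrable c d)
      ((by fun_prop : Continuous fun u ↦ S u * (u - c) * r u * D u).intervalIntegrable c d)]
    congr 1
    ext u
    ring
  rw [hparts, hsplit]
  ring

lemma integral_eq_sum_integral_of_eqOn_Ioc {T : ℕ → ℝ} {a b : ℕ} (hab : a ≤ b)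
    (hT : ∀ i, a ≤ i → i < b → T i ≤ T (i + 1)) {f : ℝ → ℝ} {φ : ℕ → ℝ → ℝ}
    (hf : ∀ i, a ≤ i → i < b → EqOn f (φ i) (Ioc (T i) (T (i + 1))))
    (hφ : ∀ i, IntervalIntegrable (φ i) volume (T i) (T (i + 1))) :
    ∫ u in T a..T b, f u = ∑ i ∈ Finset.Ico a b, ∫ u in T i..T (i + 1), φ i u := by
  have hpiece : ∀ i, a ≤ i → i < b → EqOn f (φ i) (uIoc (T i) (T (i + 1))) := by
    intro i hai hib
    rw [uIoc_of_le (hT i hai hib)]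
    exact hf i hai hib
  rw [← sum_integral_adjacent_intervals_Ico hab fun i hi ↦
    (intervalIntegrable_congr (hpiece i hi.1 hi.2)).2 (hφ i)]
  refine Finset.sum_congr rfl fun i hi ↦ integral_congr_ae ?_
  obtain ⟨hai, hib⟩ := Finset.mem_Ico.1 hi
  exact Filter.Eventually.of_forall fun u hu ↦ hpiece i hai hib hu

lemma Finset.sum_Ioc_eq_sum_Ico_add_one {M : Type*} [AddCommMonoid M] (f : ℕ → M) (a b : ℕ) :
    ∑ i ∈ Finset.Ioc a b, f i = ∑ i ∈ Finset.Ico a b, f (i + 1) := by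
  rw [Finset.sum_Ico_add', Finset.Ico_add_one_add_one_eq_Ioc]

theorem accrual_integration_by_parts
    (a b : ℕ) (hab : a < b)
    (T : ℕ → ℝ) (hTmono : ∀ i, a ≤ i → i < b → T i < T (i + 1))
    (r S S' : ℝ → ℝ)
    (hr : Continuous r)
    (hS : ∀ u, HasDerivAt S (S' u) u)
    (hS' : Continuous S')
    (D : ℝ → ℝ)
    (hD : ∀ u, D u = Real.exp (-(∫ s in (T a)..u, r s)))
    (g : ℝ → ℝ)
    (hg : ∀ i, a ≤ i → i < b → ∀ u ∈ Set.Ioc (T i) (T (i + 1)), g u = u - T i) :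
    (∫ u in (T a)..(T b), D u * g u * S' u)
      = (∑ i ∈ Finset.Ioc a b, (T i - T (i - 1)) * D (T i) * S (T i))
        - (∫ u in (T a)..(T b), D u * S u)
        + ∫ u in (T a)..(T b), S u * g u * r u * D u := by
  have hD' : ∀ u, HasDerivAt D (-(r u * D u)) u := by
    rw [funext hD]
    exact hasDerivAt_exp_neg_integral hr (T a)
  have hDc : Continuous D := continuous_iff_continuousAt.2 fun u ↦ (hD' u).continuousAt
  have hSc : Continuous S := continuous_iff_continuousAt.2 fun u ↦ (hS u).continuousAt
  have hT : ∀ i, a ≤ i → i < b → T i ≤ T (i + 1) := fun i hai hib ↦ (hTmono i hai hib).le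
  rw [integral_eq_sum_integral_of_eqOn_Ioc hab.le hT (f := fun u ↦ D u * g u * S' u)
      (φ := fun i u ↦ D u * (u - T i) * S' u)
      (fun i hai hib u hu ↦ by simp only [hg i hai hib u hu])
      fun i ↦ (by fun_prop : Continuous _).intervalIntegrable _ _,
    integral_eq_sum_integral_of_eqOn_Ioc hab.le hT (f := fun u ↦ S u * g u * r u * D u)
      (φ := fun i u ↦ S u * (u - T i) * r u * D u)
      (fun i hai hib u hu ↦ by simp only [hg i hai hib u hu])
      fun i ↦ (by fun_prop : Continuous _).intervalIntegrable _ _,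
    ← sum_integral_adjacent_intervals_Ico hab.le
      fun i _ ↦ (by fun_prop : Continuous fun u ↦ D u * S u).intervalIntegrable _ _,
    Finset.sum_Ioc_eq_sum_Ico_add_one, ← Finset.sum_sub_distrib, ← Finset.sum_add_distrib]
  refine Finset.sum_congr rfl fun i _ ↦ ?_
  rw [Nat.add_sub_cancel]
  exact integral_mul_sub_left_mul_deriv hr hD' hS hS' (T i) (T (i + 1))
end

section
/- Decomposition of the option on a decreasing function: let φ: [0,∞) → (0,∞) be given by φ(y) = ∫_{T_a}^{T_b} h(u)A(u)e^{−B(u)y} du with h ≥ 0 continuous, A > 0, B > 0 continuous, and suppose φ(y*) = L for some y* ≥ 0 and L > 0. Then for every Y ≥ 0, (L − φ(Y))⁺ = ∫_{T_a}^{T_b} h(u)A(u)(e^{−B(u)y*} − e^{−B(u)Y})⁺ du. -/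
open Real Set MeasureTheory intervalIntegral

/- Each integrand `y ↦ h u * A u * exp (-B u * y)` is antitone, so on either side of `ystar`
all the differences `h A (e^{-B ystar} - e^{-B Y})` have one common sign; for a family of
differences of constant sign, the positive part commutes with integration. -/

theorem antitone_mul_exp_neg_mul {c b : ℝ} (hc : 0 ≤ c) (hb : 0 ≤ b) :
    Antitone fun y => c * exp (-b * y) := by
  intro y y' hyy'
  have hexp : -b * y' ≤ -b * y := by
    simpa only [neg_mul, neg_le_neg_iff] using mul_le_mul_of_nonneg_left hyy' hb
  exact mul_le_mul_of_nonneg_left (exp_le_exp.2 hexp) hc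

theorem intervalIntegral.integral_max_sub_zero_of_le_or_le {f g : ℝ → ℝ} {a b : ℝ}
    (hab : a ≤ b) (hf : IntervalIntegrable f volume a b) (hg : IntervalIntegrable g volume a b)
    (hfg : (∀ x ∈ Icc a b, g x ≤ f x) ∨ ∀ x ∈ Icc a b, f x ≤ g x) :
    ∫ x in a..b, max (f x - g x) 0 = max ((∫ x in a..b, f x) - ∫ x in a..b, g x) 0 := by
  rcases hfg with hle | hge
  · rw [max_eq_left (sub_nonneg.2 (integral_mono_on hab hg hf hle)), ← integral_sub hf hg]
    refine integral_congr fun x hx => max_eq_left (sub_nonneg.2 (hle x ?_))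
    rwa [uIcc_of_le hab] at hx
  · rw [max_eq_right (sub_nonpos.2 (integral_mono_on hab hf hg hge))]
    have hzero : EqOn (fun x => max (f x - g x) 0) (fun _ => (0 : ℝ)) (uIcc a b) := by
      intro x hx
      rw [uIcc_of_le hab] at hx
      exact max_eq_right (sub_nonpos.2 (hge x hx))
    rw [integral_congr hzero, integral_zero]

theorem jamshidian_decomposition_identity_general
    (Ta Tb : ℝ) (hT : Ta ≤ Tb)
    (A B h : ℝ → ℝ)
    (hA : ContinuousOn A (Set.Icc Ta Tb))
    (hB : ContinuousOn B (Set.Icc Ta Tb))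
    (hh : ContinuousOn h (Set.Icc Ta Tb))
    (hApos : ∀ u ∈ Set.Icc Ta Tb, 0 < A u)
    (hBpos : ∀ u ∈ Set.Icc Ta Tb, 0 < B u)
    (hhnn : ∀ u ∈ Set.Icc Ta Tb, 0 ≤ h u)
    (φ : ℝ → ℝ)
    (hφ : ∀ y, φ y = ∫ u in Ta..Tb, h u * A u * Real.exp (-(B u) * y))
    (L ystar : ℝ)
    (hstrike : φ ystar = L) :
    ∀ Y : ℝ, 0 ≤ Y →
      max (L - φ Y) 0
        = ∫ u in Ta..Tb, h u * A u *
            max (Real.exp (-(B u) * ystar) - Real.exp (-(B u) * Y)) 0 := by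
  intro Y _
  have hweight : ∀ u ∈ Icc Ta Tb, 0 ≤ h u * A u := fun u hu =>
    mul_nonneg (hhnn u hu) (hApos u hu).le
  have hint : ∀ y, IntervalIntegrable (fun u => h u * A u * exp (-(B u) * y)) volume Ta Tb :=
    fun y => ContinuousOn.intervalIntegrable <| by
      rw [uIcc_of_le hT]
      exact (hh.mul hA).mul (hB.neg.mul continuousOn_const).rexp
  have hanti : ∀ u ∈ Icc Ta Tb, Antitone fun y => h u * A u * exp (-(B u) * y) := fun u hu =>
    antitone_mul_exp_neg_mul (hweight u hu) (hBpos u hu).le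
  rw [← hstrike, hφ, hφ, ← integral_max_sub_zero_of_le_or_le hT (hint ystar) (hint Y)
    ((le_total ystar Y).imp (fun hle u hu => hanti u hu hle) (fun hge u hu => hanti u hu hge))]
  refine integral_congr fun u hu => ?_
  rw [uIcc_of_le hT] at hu
  simp only [mul_max_of_nonneg _ _ (hweight u hu), mul_sub, mul_zero]

theorem jamshidian_decomposition_identity
    (Ta Tb : ℝ) (hT : Ta ≤ Tb)
    (A B h : ℝ → ℝ)
    (hA : ContinuousOn A (Set.Icc Ta Tb))
    (hB : ContinuousOn B (Set.Icc Ta Tb))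
    (hh : ContinuousOn h (Set.Icc Ta Tb))
    (hApos : ∀ u ∈ Set.Icc Ta Tb, 0 < A u)
    (hBpos : ∀ u ∈ Set.Icc Ta Tb, 0 < B u)
    (hhnn : ∀ u ∈ Set.Icc Ta Tb, 0 ≤ h u)
    (φ : ℝ → ℝ)
    (hφ : ∀ y, φ y = ∫ u in Ta..Tb, h u * A u * Real.exp (-(B u) * y))
    (L ystar : ℝ) (hL : 0 < L) (hystar : 0 ≤ ystar)
    (hstrike : φ ystar = L) :
    ∀ Y : ℝ, 0 ≤ Y →
      max (L - φ Y) 0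
        = ∫ u in Ta..Tb, h u * A u *
            max (Real.exp (-(B u) * ystar) - Real.exp (-(B u) * Y)) 0 :=
  jamshidian_decomposition_identity_general Ta Tb hT A B h hA hB hh hApos hBpos hhnn φ hφ L ystar
    hstrike
end
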